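/- Let K ≥ 1, Q a positive multiple of K, and θ_1 ≤ θ_2 ≤ ... ≤ θ_N positive integers with θ_n ≤ K, average r = (∑_n θ_n)/N. Define σ_n = (Q/K)·(K - θ_n)/min{2θ_n, K} and C_n = (Q/K)(K - θ_n). Then ∑_{n=1}^N σ_n ≥ (∑_{n=1}^N C_n)/min{2r, K} = Q·N·(1 - r/K)/min{2r, K}. -/

import Mathlib

/-!
Write `σ_n = C_n / m_n` with `m_n = min{2θ_n, K}`. As `θ` increases, `σ` decreases and `m`
increases, so Chebyshev's sum inequality gives `N ∑ C ≤ (∑ σ)(∑ m)`, and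
`∑ m ≤ min{∑ 2θ_n, N K} = N min{2r, K}`.
-/

open Finset

variable {ι α : Type*} [Field α] [LinearOrder α] [IsStrictOrderedRing α]

theorem Antitone.div_monotone [Preorder ι] {c m : ι → α} (hc : Antitone c)
    (hc₀ : ∀ i, 0 ≤ c i) (hm : Monotone m) (hm₀ : ∀ i, 0 < m i) :
    Antitone fun i ↦ c i / m i :=
  fun i _ hij ↦ div_le_div₀ (hc₀ i) (hc hij) (hm₀ i) (hm hij)

theorem sum_min_le_card_mul_min_average [Fintype ι] [Nonempty ι] (a : ι → α) (b : α) :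
    ∑ i, min (a i) b ≤ Fintype.card ι * min ((∑ i, a i) / Fintype.card ι) b := by
  have hcard : (Fintype.card ι : α) ≠ 0 := by exact_mod_cast Fintype.card_ne_zero
  rw [mul_min_of_nonneg _ _ (Nat.cast_nonneg _), mul_div_cancel₀ _ hcard]
  simpa using sum_min_le (s := univ) (f := a) (g := fun _ ↦ b)

theorem sum_div_le_sum_div_of_antivary [Fintype ι] [Nonempty ι] {c m : ι → α} {M : α}
    (hanti : Antivary (fun i ↦ c i / m i) m) (hm₀ : ∀ i, 0 < m i) (hc₀ : ∀ i, 0 ≤ c i)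
    (hM : 0 < M) (hsum : ∑ i, m i ≤ Fintype.card ι * M) :
    (∑ i, c i) / M ≤ ∑ i, c i / m i := by
  have hcard : (0 : α) < Fintype.card ι := by exact_mod_cast Fintype.card_pos
  have hσ₀ : 0 ≤ ∑ i, c i / m i := sum_nonneg fun i _ ↦ div_nonneg (hc₀ i) (hm₀ i).le
  rw [div_le_iff₀ hM, ← mul_le_mul_iff_right₀ hcard]
  calc Fintype.card ι * ∑ i, c i
      = Fintype.card ι * ∑ i, c i / m i * m i := by
        simp only [div_mul_cancel₀ _ (hm₀ _).ne']
    _ ≤ (∑ i, c i / m i) * ∑ i, m i := hanti.card_mul_sum_le_sum_mul_sum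
    _ ≤ (∑ i, c i / m i) * (Fintype.card ι * M) := mul_le_mul_of_nonneg_left hsum hσ₀
    _ = Fintype.card ι * ((∑ i, c i / m i) * M) := by ring

theorem sigma_sum_bound_general (K Q N : ℕ) (hK : 1 ≤ K)
    (hN : 0 < N) (θ : Fin N → ℕ) (hmono : Monotone θ)
    (hpos : ∀ n, 0 < θ n) (hle : ∀ n, θ n ≤ K) (r : ℝ)
    (hr : r = (∑ n, (θ n : ℝ)) / N) :
    (∑ n, ((Q : ℝ) / K) * ((K : ℝ) - θ n) / ((min (2 * θ n) K : ℕ) : ℝ))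
      ≥ (∑ n, ((Q : ℝ) / K) * ((K : ℝ) - θ n)) / min (2 * r) (K : ℝ) ∧
    (∑ n, ((Q : ℝ) / K) * ((K : ℝ) - θ n)) / min (2 * r) (K : ℝ)
      = (Q : ℝ) * N * (1 - r / K) / min (2 * r) (K : ℝ) := by
  have : NeZero N := ⟨hN.ne'⟩
  have hK₀ : (0 : ℝ) < K := by exact_mod_cast hK
  have hsumθ : ∑ n, (θ n : ℝ) = N * r := by rw [hr]; field_simp
  have hr₀ : 0 < r := by
    have : (0 : ℝ) < ∑ n, (θ n : ℝ) := sum_pos (fun n _ ↦ by exact_mod_cast hpos n) univ_nonempty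
    rw [hr]; positivity
  set m : Fin N → ℝ := fun n ↦ ((min (2 * θ n) K : ℕ) : ℝ)
  have hm₀ : ∀ n, 0 < m n := fun n ↦ by have := hpos n; simp only [m]; positivity
  have hm : Monotone m := fun i j hij ↦ by simp only [m]; gcongr; exact hmono hij
  have hc₀ : ∀ n, 0 ≤ (Q : ℝ) / K * (K - θ n) := fun n ↦
    mul_nonneg (by positivity) (sub_nonneg.2 (by exact_mod_cast hle n))
  have hc : Antitone fun n ↦ (Q : ℝ) / K * (K - θ n) := fun i j hij ↦
    mul_le_mul_of_nonneg_left (sub_le_sub_left (by exact_mod_cast hmono hij) _) (by positivity)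
  have hcap : ∑ n, m n ≤ N * min (2 * r) K := by
    have h2r : (∑ n, 2 * (θ n : ℝ)) / N = 2 * r := by rw [← mul_sum, hr, mul_div_assoc]
    simpa [m, h2r] using sum_min_le_card_mul_min_average (fun n ↦ 2 * (θ n : ℝ)) (K : ℝ)
  refine ⟨sum_div_le_sum_div_of_antivary ((hc.div_monotone hc₀ hm hm₀).antivary hm) hm₀ hc₀
    (lt_min (by linarith) hK₀) (by rwa [Fintype.card_fin]), ?_⟩
  congr 1
  rw [← mul_sum, sum_sub_distrib, hsumθ, sum_const, card_univ, Fintype.card_fin, nsmul_eq_mul]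
  field_simp

/-- Asymmetric converse: σ_sum ≥ C_total / min{2r, K} = Q·N·(1-r/K)/min{2r,K}. -/
theorem sigma_sum_bound (K Q N : ℕ) (hK : 1 ≤ K) (hQ : 0 < Q) (hdvd : K ∣ Q)
    (hN : 0 < N) (θ : Fin N → ℕ) (hmono : Monotone θ)
    (hpos : ∀ n, 0 < θ n) (hle : ∀ n, θ n ≤ K) (r : ℝ)
    (hr : r = (∑ n, (θ n : ℝ)) / N) :
    (∑ n, ((Q : ℝ) / K) * ((K : ℝ) - θ n) / ((min (2 * θ n) K : ℕ) : ℝ))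
      ≥ (∑ n, ((Q : ℝ) / K) * ((K : ℝ) - θ n)) / min (2 * r) (K : ℝ) ∧
    (∑ n, ((Q : ℝ) / K) * ((K : ℝ) - θ n)) / min (2 * r) (K : ℝ)
      = (Q : ℝ) * N * (1 - r / K) / min (2 * r) (K : ℝ) :=
  sigma_sum_bound_general K Q N hK hN θ hmono hpos hle r hr
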